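/- For nonnegative reals a₀,...,a_K and q ∈ (0,1): ∑_{j=0}^{K}∑_{s=j+1}^{K} q^{2K−j−s} · 2·a_j·a_s ≤ (2/(1−q)) ∑_{j=0}^{K} q^{K−j} a_j². -/

import Mathlib

/-! Writing `x j = q ^ (K - j)`, the weight `q ^ (2K - j - s)` factors as `x j * x s`, so AM-GM
`2 a_j a_s ≤ a_j² + a_s²` bounds the cross term by two triangular sums of terms `x i * (x k * a_k²)`.
Each is at most the full square sum `(∑ x) * ∑ x j * a_j²`, and `∑ x ≤ 1 / (1 - q)`. -/

open Finset

lemma sum_Icc_succ_le_sum_range {f : ℕ → ℕ → ℝ} (hf : ∀ j s, 0 ≤ f j s) (K : ℕ) :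
    ∑ j ∈ range (K + 1), ∑ s ∈ Icc (j + 1) K, f j s ≤
      ∑ j ∈ range (K + 1), ∑ s ∈ range (K + 1), f j s := by
  refine sum_le_sum fun j _ => sum_le_sum_of_subset_of_nonneg ?_ fun s _ _ => hf j s
  intro s hs
  simp only [mem_Icc, mem_range] at hs ⊢
  omega

lemma sum_range_pow_sub_le {q : ℝ} (hq0 : 0 ≤ q) (hq1 : q < 1) (K : ℕ) :
    ∑ j ∈ range (K + 1), q ^ (K - j) ≤ 1 / (1 - q) := by
  have hreflect := sum_range_reflect (fun t => q ^ t) (K + 1)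
  simp only [Nat.add_sub_cancel] at hreflect
  rw [hreflect, range_eq_Ico]
  simpa only [pow_zero] using geom_sum_Ico_le_of_lt_one (m := 0) (n := K + 1) hq0 hq1

lemma pow_two_mul_sub_sub_mul_le {q : ℝ} (hq : 0 ≤ q) {K j s : ℕ} (hj : j ≤ K) (hs : s ≤ K)
    (a b : ℝ) :
    q ^ (2 * K - j - s) * (2 * a * b) ≤
      q ^ (K - j) * a ^ 2 * q ^ (K - s) + q ^ (K - j) * (q ^ (K - s) * b ^ 2) := by
  have hexp : 2 * K - j - s = (K - j) + (K - s) := by omega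
  rw [hexp, pow_add]
  calc q ^ (K - j) * q ^ (K - s) * (2 * a * b)
      ≤ q ^ (K - j) * q ^ (K - s) * (a ^ 2 + b ^ 2) := by
        gcongr
        exact two_mul_le_add_sq a b
    _ = _ := by ring

theorem stmt_11_general (q : ℝ) (hq0 : 0 < q) (hq1 : q < 1) (K : ℕ)
    (a : ℕ → ℝ) :
    ∑ j ∈ Finset.range (K + 1), ∑ s ∈ Finset.Icc (j + 1) K,
        q ^ (2 * K - j - s) * (2 * a j * a s) ≤
      (2 / (1 - q)) * ∑ j ∈ Finset.range (K + 1), q ^ (K - j) * a j ^ 2 := by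
  set X := ∑ j ∈ range (K + 1), q ^ (K - j)
  set S := ∑ j ∈ range (K + 1), q ^ (K - j) * a j ^ 2
  have hS : 0 ≤ S := sum_nonneg fun j _ => by positivity
  have hX : X ≤ 1 / (1 - q) := sum_range_pow_sub_le hq0.le hq1 K
  calc _ ≤ ∑ j ∈ range (K + 1), ∑ s ∈ Icc (j + 1) K,
          (q ^ (K - j) * a j ^ 2 * q ^ (K - s) + q ^ (K - j) * (q ^ (K - s) * a s ^ 2)) := by
        refine sum_le_sum fun j hj => sum_le_sum fun s hs => ?_
        simp only [mem_range, mem_Icc] at hj hs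
        exact pow_two_mul_sub_sub_mul_le hq0.le (by omega) hs.2 _ _
    _ = ∑ j ∈ range (K + 1), ∑ s ∈ Icc (j + 1) K, q ^ (K - j) * a j ^ 2 * q ^ (K - s) +
          ∑ j ∈ range (K + 1), ∑ s ∈ Icc (j + 1) K, q ^ (K - j) * (q ^ (K - s) * a s ^ 2) := by
        simp only [sum_add_distrib]
    _ ≤ S * X + X * S := by
        rw [sum_mul_sum, sum_mul_sum]
        exact add_le_add (sum_Icc_succ_le_sum_range (fun j s => by positivity) K)
          (sum_Icc_succ_le_sum_range (fun j s => by positivity) K)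
    _ = 2 * (X * S) := by ring
    _ ≤ 2 * (1 / (1 - q) * S) := by gcongr
    _ = 2 / (1 - q) * S := by ring

theorem stmt_11 (q : ℝ) (hq0 : 0 < q) (hq1 : q < 1) (K : ℕ)
    (a : ℕ → ℝ) (ha : ∀ j, 0 ≤ a j) :
    ∑ j ∈ Finset.range (K + 1), ∑ s ∈ Finset.Icc (j + 1) K,
        q ^ (2 * K - j - s) * (2 * a j * a s) ≤
      (2 / (1 - q)) * ∑ j ∈ Finset.range (K + 1), q ^ (K - j) * a j ^ 2 :=
  stmt_11_general q hq0 hq1 K a
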